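/- Let G = (V, E) be a finite digraph and s, t ∈ V with s ≠ t, and let v_1, …, v_d be an enumeration of the out-neighbors of s. For a set A of out-neighbors of s, let f(A) denote the maximum cardinality of a set of pairwise edge-disjoint directed paths from s to t each of whose first arc is (s, v) for some v ∈ A. Define S_0 = ∅ and, for j = 1, …, d, let S_j = S_{j−1} ∪ {v_j} if f(S_{j−1} ∪ {v_j}) > f(S_{j−1}), and S_j = S_{j−1} otherwise. Then f(S_d) = |S_d| and |S_d| equals the maximum cardinality of a set of pairwise edge-disjoint directed paths from s to t in G. -/

import Mathlib

/-- The list of arcs traversed by a path given as a list of vertices. -/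
def pathArcs {V : Type*} (p : List V) : List (V × V) := p.zip p.tail

/-- `p` is a directed path from `s` to `t` in the digraph with arc set `E`:
a nonempty list of pairwise distinct vertices, starting at `s`, ending at `t`,
with consecutive vertices joined by arcs of `E`. -/
def IsPath {V : Type*} (E : Finset (V × V)) (s t : V) (p : List V) : Prop :=
  p.Nodup ∧ p.Chain' (fun u v => (u, v) ∈ E) ∧ p.head? = some s ∧ p.getLast? = some t

/-- Two paths are edge-disjoint if they share no arc. -/
def EdgeDisjoint {V : Type*} (p q : List V) : Prop :=
  ∀ a : V × V, a ∈ pathArcs p → a ∉ pathArcs q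

/-- Two `s`–`t` paths are internally node-disjoint if the only vertices they share
are `s` and `t`. -/
def IntDisjoint {V : Type*} (s t : V) (p q : List V) : Prop :=
  ∀ v : V, v ∈ p → v ∈ q → v = s ∨ v = t

/-- `P` is a set of pairwise edge-disjoint directed paths from `s` to `t`. -/
def IsEdgeDisjointFamily {V : Type*} (E : Finset (V × V)) (s t : V)
    (P : Finset (List V)) : Prop :=
  (∀ p ∈ P, IsPath E s t p) ∧ (P : Set (List V)).Pairwise EdgeDisjoint

/-- `P` is a set of pairwise internally node-disjoint directed paths from `s` to `t`. -/
def IsNodeDisjointFamily {V : Type*} (E : Finset (V × V)) (s t : V)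
    (P : Finset (List V)) : Prop :=
  (∀ p ∈ P, IsPath E s t p) ∧ (P : Set (List V)).Pairwise (IntDisjoint s t)

/-- `fMax E s t A` is the maximum cardinality of a set of pairwise edge-disjoint directed
paths from `s` to `t` each of whose first arc is `(s, v)` for some `v ∈ A`. -/
noncomputable def fMax {V : Type*} (E : Finset (V × V)) (s t : V) (A : Finset V) : ℕ :=
  sSup {n | ∃ P : Finset (List V), P.card = n ∧ IsEdgeDisjointFamily E s t P ∧
    ∀ p ∈ P, ∃ v ∈ A, (pathArcs p).head? = some (s, v)}

/-!
By Menger's theorem, `fMax E s t A` is the minimum size of an `s`–`t` cut in the digraph whose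
arcs out of `s` are only those ending in `A`. The size of a cut is jointly submodular in the cut
and in `A`, so `fMax` is monotone, submodular, and grows by at most one when a vertex is added:
it is the rank function of a matroid on the out-neighbours of `s`, and the greedy procedure
builds a basis of it. A rejected vertex never becomes useful later, since submodularity turns
`f (S ∪ {v}) = f S` into `f (T ∪ {v}) = f T` for every `T ⊇ S`.
-/

open Finset Relation

section PathArcs
variable {V : Type*}

@[simp] lemma pathArcs_nil : pathArcs ([] : List V) = [] := rfl

@[simp] lemma pathArcs_singleton (a : V) : pathArcs [a] = [] := rfl

@[simp] lemma pathArcs_cons_cons (a b : V) (r : List V) :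
    pathArcs (a :: b :: r) = (a, b) :: pathArcs (b :: r) := rfl

lemma fst_mem_of_mem_pathArcs {p : List V} {a : V × V} (h : a ∈ pathArcs p) : a.1 ∈ p :=
  (List.of_mem_zip h).1

lemma isChain_iff_forall_mem_pathArcs {R : V → V → Prop} :
    ∀ {p : List V}, p.IsChain R ↔ ∀ a ∈ pathArcs p, R a.1 a.2
  | [] | [_] => by simp
  | a :: b :: r => by
    simp [List.isChain_cons_cons, isChain_iff_forall_mem_pathArcs (p := b :: r)]

lemma nodup_pathArcs : ∀ {p : List V}, p.Nodup → (pathArcs p).Nodup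
  | [], _ | [_], _ => by simp
  | a :: b :: r, h => by
    rw [List.nodup_cons] at h
    rw [pathArcs_cons_cons, List.nodup_cons]
    exact ⟨fun hab => h.1 (fst_mem_of_mem_pathArcs hab), nodup_pathArcs h.2⟩

lemma exists_mem_pathArcs_of_mem_of_notMem (U : Set V) :
    ∀ {p : List V} {s t : V}, p.head? = some s → p.getLast? = some t → s ∈ U → t ∉ U →
      ∃ a ∈ pathArcs p, a.1 ∈ U ∧ a.2 ∉ U
  | [], _, _, hs, _, _, _ => by simp at hs
  | [_], _, _, hs, ht, hsU, htU => by
    simp only [List.head?_cons, List.getLast?_singleton, Option.some.injEq] at hs ht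
    subst hs ht
    exact absurd hsU htU
  | a :: b :: r, s, t, hs, ht, hsU, htU => by
    simp only [List.head?_cons, Option.some.injEq] at hs
    subst hs
    by_cases hb : b ∈ U
    · obtain ⟨x, hx, hxU⟩ := exists_mem_pathArcs_of_mem_of_notMem U (p := b :: r) rfl
        (by simpa using ht) hb htU
      exact ⟨x, by simp [hx], hxU⟩
    · exact ⟨(a, b), by simp, hsU, hb⟩

end PathArcs

section Paths
variable {V : Type*} {E E' : Finset (V × V)} {s t : V} {p : List V}

lemma IsPath.mem_of_mem_pathArcs (hp : IsPath E s t p) {a : V × V} (ha : a ∈ pathArcs p) :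
    a ∈ E :=
  isChain_iff_forall_mem_pathArcs.1 hp.2.1 a ha

lemma IsPath.mono (hp : IsPath E s t p) (h : E ⊆ E') : IsPath E' s t p :=
  ⟨hp.1, hp.2.1.imp fun _ _ hab => h hab, hp.2.2⟩

lemma IsEdgeDisjointFamily.mono {P : Finset (List V)} (hP : IsEdgeDisjointFamily E s t P)
    (h : E ⊆ E') : IsEdgeDisjointFamily E' s t P :=
  ⟨fun p hp => (hP.1 p hp).mono h, hP.2⟩

lemma IsPath.eq_cons_cons (hp : IsPath E s t p) (hst : s ≠ t) : ∃ b r, p = s :: b :: r := by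
  obtain ⟨-, -, hs, ht⟩ := hp
  match p, hs with
  | [_], hs =>
    simp only [List.head?_cons, List.getLast?_singleton, Option.some.injEq] at hs ht
    exact absurd (hs.symm.trans ht) hst
  | _ :: b :: r, hs =>
    simp only [List.head?_cons, Option.some.injEq] at hs
    exact ⟨b, r, hs ▸ rfl⟩

lemma IsPath.exists_mem_pathArcs (hp : IsPath E s t p) (hst : s ≠ t) :
    ∃ b, (s, b) ∈ pathArcs p := by
  obtain ⟨b, r, rfl⟩ := hp.eq_cons_cons hst
  exact ⟨b, by simp⟩

lemma exists_isPath_of_reflTransGen (h : ReflTransGen (fun x y => (x, y) ∈ E) s t) :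
    ∃ p, IsPath E s t p := by
  induction h with
  | refl => exact ⟨[s], List.nodup_singleton s, List.isChain_singleton s, rfl, rfl⟩
  | @tail x y _ hxy ih =>
    obtain ⟨p, hnd, hch, hs, hx⟩ := ih
    by_cases hy : y ∈ p
    · obtain ⟨i, hi, rfl⟩ := List.getElem_of_mem hy
      refine ⟨p.take (i + 1), hnd.sublist (List.take_sublist _ _), hch.take _, ?_, ?_⟩
      · simpa [List.head?_take] using hs
      · simp [List.getLast?_take, hi]
    · refine ⟨p ++ [y], ?_, ?_, ?_, by simp⟩
      · simpa [List.nodup_append, hnd] using fun a ha (hay : a = y) => hy (hay ▸ ha)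
      · exact List.isChain_append.2 ⟨hch, by simp, by simpa [hx] using hxy⟩
      · cases p <;> simp_all

end Paths

section Flows
variable {V : Type*} [DecidableEq V] {E F G : Finset (V × V)} {s t w : V} {U : Finset V}

def netOut (F : Finset (V × V)) (w : V) : ℤ :=
  ∑ a ∈ F, ((if a.1 = w then 1 else 0) - (if a.2 = w then 1 else 0))

def cutCard (E : Finset (V × V)) (U : Finset V) : ℕ := #{a ∈ E | a.1 ∈ U ∧ a.2 ∉ U}

/-- A unit-capacity `s`–`t` flow, given by the set `F` of arcs carrying one unit;
its value is `netOut F s`. -/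
def IsFlow (s t : V) (F : Finset (V × V)) : Prop := ∀ w, w ≠ s → w ≠ t → netOut F w = 0

lemma netOut_union (h : Disjoint F G) : netOut (F ∪ G) w = netOut F w + netOut G w :=
  sum_union h

lemma netOut_sdiff (h : G ⊆ F) : netOut (F \ G) w = netOut F w - netOut G w :=
  eq_sub_of_add_eq (sum_sdiff h)

lemma netOut_image_swap : netOut (F.image Prod.swap) w = -netOut F w := by
  rw [netOut, sum_image fun _ _ _ _ h => Prod.swap_injective h, netOut, ← sum_neg_distrib]
  simp

lemma netOut_filter_add_filter_not (p : V × V → Prop) [DecidablePred p] :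
    netOut {a ∈ F | p a} w + netOut {a ∈ F | ¬p a} w = netOut F w :=
  sum_filter_add_sum_filter_not F p _

lemma netOut_pathArcs :
    ∀ {p : List V}, p.Nodup → ∀ {s t : V}, p.head? = some s → p.getLast? = some t →
      netOut (pathArcs p).toFinset w = (if s = w then 1 else 0) - (if t = w then 1 else 0)
  | [], _, _, _, hs, _ => by simp at hs
  | [_], _, _, _, hs, ht => by
    simp only [List.head?_cons, List.getLast?_singleton, Option.some.injEq] at hs ht
    simp [← hs, ← ht, netOut]
  | a :: b :: r, hp, s, t, hs, ht => by
    simp only [List.head?_cons, Option.some.injEq] at hs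
    subst hs
    have ih := netOut_pathArcs (List.nodup_cons.1 hp).2 (s := b) rfl (by simpa using ht)
    rw [netOut, List.sum_toFinset _ (nodup_pathArcs (List.nodup_cons.1 hp).2)] at ih
    rw [netOut, List.sum_toFinset _ (nodup_pathArcs hp)]
    rw [pathArcs_cons_cons, List.map_cons, List.sum_cons, ih]
    ring

lemma IsPath.netOut_pathArcs {p : List V} (hp : IsPath E s t p) (w : V) :
    netOut (pathArcs p).toFinset w = (if s = w then 1 else 0) - (if t = w then 1 else 0) :=
  _root_.netOut_pathArcs hp.1 hp.2.2.1 hp.2.2.2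

lemma cutCard_eq_sum_netOut (F : Finset (V × V)) (U : Finset V) :
    (cutCard F U : ℤ) = ∑ w ∈ U, netOut F w + #{a ∈ F | a.1 ∉ U ∧ a.2 ∈ U} := by
  simp only [netOut, cutCard, card_filter]
  rw [sum_comm]
  push_cast
  rw [← sum_add_distrib]
  refine sum_congr rfl fun a _ => ?_
  simp only [sum_sub_distrib, sum_ite_eq]
  by_cases a.1 ∈ U <;> by_cases a.2 ∈ U <;> simp_all

lemma IsFlow.cutCard_eq (hF : IsFlow s t F) (hsU : s ∈ U) (htU : t ∉ U) :
    (cutCard F U : ℤ) = netOut F s + #{a ∈ F | a.1 ∉ U ∧ a.2 ∈ U} := by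
  rw [cutCard_eq_sum_netOut, sum_eq_single_of_mem s hsU fun w hw hws =>
    hF w hws fun hwt => htU (hwt ▸ hw)]

end Flows

section Reach
variable {V : Type*} [DecidableEq V] {E : Finset (V × V)} {s x : V} {a : V × V}

open Classical in
noncomputable def reach (E : Finset (V × V)) (s : V) : Finset V :=
  {x ∈ insert s (E.image Prod.snd) | ReflTransGen (fun x y => (x, y) ∈ E) s x}

open Classical in
lemma mem_reach : x ∈ reach E s ↔ ReflTransGen (fun x y => (x, y) ∈ E) s x := by
  refine ⟨fun h => (mem_filter.1 h).2, fun h => mem_filter.2 ⟨?_, h⟩⟩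
  rcases h.cases_tail with rfl | ⟨y, -, hyx⟩
  · exact mem_insert_self _ _
  · exact mem_insert_of_mem (mem_image.2 ⟨_, hyx, rfl⟩)

lemma self_mem_reach : s ∈ reach E s := mem_reach.2 .refl

lemma snd_mem_reach (ha : a ∈ E) (h : a.1 ∈ reach E s) : a.2 ∈ reach E s :=
  mem_reach.2 ((mem_reach.1 h).tail ha)

end Reach

section Decomposition
variable {V : Type*} [DecidableEq V] {E F : Finset (V × V)} {s t : V} {P : Finset (List V)}

def familyArcs (P : Finset (List V)) : Finset (V × V) :=
  P.biUnion fun p => (pathArcs p).toFinset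

lemma IsEdgeDisjointFamily.familyArcs_subset (hP : IsEdgeDisjointFamily E s t P) :
    familyArcs P ⊆ E := by
  intro a ha
  obtain ⟨p, hp, hap⟩ := mem_biUnion.1 ha
  exact (hP.1 p hp).mem_of_mem_pathArcs (List.mem_toFinset.1 hap)

lemma IsEdgeDisjointFamily.netOut_familyArcs (hP : IsEdgeDisjointFamily E s t P) (w : V) :
    netOut (familyArcs P) w =
      P.card * ((if s = w then 1 else 0) - (if t = w then 1 else 0)) := by
  have hdisj : (P : Set (List V)).PairwiseDisjoint fun p => (pathArcs p).toFinset :=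
    fun p hp q hq hpq => disjoint_left.2 fun a hap haq =>
      hP.2 hp hq hpq a (List.mem_toFinset.1 hap) (List.mem_toFinset.1 haq)
  rw [netOut, familyArcs, sum_biUnion hdisj]
  exact (sum_congr rfl fun p hp => (hP.1 p hp).netOut_pathArcs w).trans (by simp [mul_sub])

lemma IsEdgeDisjointFamily.isFlow_familyArcs (hP : IsEdgeDisjointFamily E s t P) :
    IsFlow s t (familyArcs P) := fun w hws hwt => by
  simp [hP.netOut_familyArcs, Ne.symm hws, Ne.symm hwt]

lemma IsEdgeDisjointFamily.netOut_familyArcs_self (hP : IsEdgeDisjointFamily E s t P)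
    (hst : s ≠ t) : netOut (familyArcs P) s = P.card := by
  simp [hP.netOut_familyArcs, hst.symm]

lemma IsEdgeDisjointFamily.insert_of_isPath {q : List V}
    (hP : IsEdgeDisjointFamily (F \ (pathArcs q).toFinset) s t P) (hq : IsPath F s t q) :
    IsEdgeDisjointFamily F s t (insert q P) := by
  have hqp : ∀ p ∈ P, ∀ a ∈ pathArcs q, a ∉ pathArcs p := fun p hp a haq hap =>
    (mem_sdiff.1 ((hP.1 p hp).mem_of_mem_pathArcs hap)).2 (List.mem_toFinset.2 haq)
  refine ⟨fun p hp => ?_, ?_⟩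
  · rcases mem_insert.1 hp with rfl | hp
    exacts [hq, (hP.1 p hp).mono sdiff_subset]
  · rw [coe_insert]
    exact hP.2.insert fun p hp _ => ⟨hqp p hp, fun a hap haq => hqp p hp a haq hap⟩

lemma IsFlow.exists_family (hst : s ≠ t) (hF : IsFlow s t F) :
    ∃ P, IsEdgeDisjointFamily F s t P ∧ netOut F s ≤ P.card := by
  induction hn : F.card using Nat.strong_induction_on generalizing F with
  | _ n ih =>
  by_cases hpos : netOut F s ≤ 0
  · exact ⟨∅, ⟨by simp, by simp⟩, by simpa using hpos⟩
  have ht : t ∈ reach F s := by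
    by_contra ht
    have hcut : cutCard F (reach F s) = 0 :=
      card_eq_zero.2 (filter_eq_empty_iff.2 fun a ha h => h.2 (snd_mem_reach ha h.1))
    have := hF.cutCard_eq self_mem_reach ht
    omega
  obtain ⟨q, hq⟩ := exists_isPath_of_reflTransGen (mem_reach.1 ht)
  have hqF : (pathArcs q).toFinset ⊆ F := fun a ha =>
    hq.mem_of_mem_pathArcs (List.mem_toFinset.1 ha)
  obtain ⟨b, hb⟩ := hq.exists_mem_pathArcs hst
  have hnet : ∀ w, netOut (F \ (pathArcs q).toFinset) w =
      netOut F w - ((if s = w then 1 else 0) - (if t = w then 1 else 0)) := fun w => by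
    rw [netOut_sdiff hqF, hq.netOut_pathArcs]
  have hlt : (F \ (pathArcs q).toFinset).card < n :=
    hn ▸ card_lt_card (sdiff_ssubset hqF ⟨(s, b), List.mem_toFinset.2 hb⟩)
  obtain ⟨P, hP, hcard⟩ := ih _ hlt (F := F \ (pathArcs q).toFinset)
    (fun w hws hwt => by simp [hnet, hF w hws hwt, Ne.symm hws, Ne.symm hwt]) rfl
  have hqP : q ∉ P := fun h =>
    (mem_sdiff.1 ((hP.1 q h).mem_of_mem_pathArcs hb)).2 (List.mem_toFinset.2 hb)
  refine ⟨insert q P, hP.insert_of_isPath hq, ?_⟩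
  rw [card_insert_of_notMem hqP]
  simp only [hnet, if_neg hst.symm] at hcard
  push_cast
  omega

end Decomposition

section Augmentation
variable {V : Type*} [DecidableEq V] {E F X : Finset (V × V)} {s t : V}

def residualArcs (E F : Finset (V × V)) : Finset (V × V) := (E \ F) ∪ F.image Prod.swap

/-- Push one unit along the arcs `X` of a residual path: arcs of `X` that reverse an arc of
`F` cancel it, the others are added. -/
def augment (F X : Finset (V × V)) : Finset (V × V) :=
  (F \ {a ∈ X | a.swap ∈ F}.image Prod.swap) ∪ {a ∈ X | a.swap ∉ F}

lemma netOut_augment (hX : ∀ a ∈ X, a.swap ∉ F → a ∉ F) (w : V) :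
    netOut (augment F X) w = netOut F w + netOut X w := by
  have hB : {a ∈ X | a.swap ∈ F}.image Prod.swap ⊆ F := by
    intro a ha
    obtain ⟨b, hb, rfl⟩ := mem_image.1 ha
    exact (mem_filter.1 hb).2
  have hdisj : Disjoint (F \ {a ∈ X | a.swap ∈ F}.image Prod.swap) {a ∈ X | a.swap ∉ F} :=
    disjoint_right.2 fun a ha haF =>
      hX a (mem_filter.1 ha).1 (mem_filter.1 ha).2 (mem_sdiff.1 haF).1
  rw [augment, netOut_union hdisj, netOut_sdiff hB, netOut_image_swap,
    ← netOut_filter_add_filter_not (F := X) fun a => a.swap ∈ F]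
  ring

lemma augment_subset (hFE : F ⊆ E) (hX : X ⊆ residualArcs E F) : augment F X ⊆ E := by
  refine union_subset (sdiff_subset.trans hFE) fun a ha => ?_
  obtain ⟨haX, haF⟩ := mem_filter.1 ha
  rcases mem_union.1 (hX haX) with h | h
  · exact (mem_sdiff.1 h).1
  · obtain ⟨b, hb, rfl⟩ := mem_image.1 h
    exact absurd (by simpa using hb) haF

lemma IsFlow.augment_pathArcs {q : List V} (hst : s ≠ t) (hF : IsFlow s t F)
    (hq : IsPath (residualArcs E F) s t q) :
    IsFlow s t (augment F (pathArcs q).toFinset) ∧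
      netOut (augment F (pathArcs q).toFinset) s = netOut F s + 1 := by
  have hX : ∀ a ∈ (pathArcs q).toFinset, a.swap ∉ F → a ∉ F := fun a ha haF => by
    rcases mem_union.1 (hq.mem_of_mem_pathArcs (List.mem_toFinset.1 ha)) with h | h
    · exact (mem_sdiff.1 h).2
    · obtain ⟨b, hb, rfl⟩ := mem_image.1 h
      exact absurd (by simpa using hb) haF
  refine ⟨fun w hws hwt => ?_, ?_⟩
  · simp [netOut_augment hX, hq.netOut_pathArcs, hF w hws hwt, hws.symm, hwt.symm]
  · simp [netOut_augment hX, hq.netOut_pathArcs, hst.symm]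

lemma IsFlow.cutCard_le_netOut {U : Finset V} (hF : IsFlow s t F) (hsU : s ∈ U) (htU : t ∉ U)
    (hU : ∀ a ∈ residualArcs E F, a.1 ∈ U → a.2 ∈ U) :
    (cutCard E U : ℤ) ≤ netOut F s := by
  have hout : cutCard E U ≤ cutCard F U := by
    refine card_le_card fun a ha => ?_
    obtain ⟨haE, h1, h2⟩ := mem_filter.1 ha
    refine mem_filter.2 ⟨?_, h1, h2⟩
    by_contra haF
    exact h2 (hU a (mem_union_left _ (mem_sdiff.2 ⟨haE, haF⟩)) h1)
  have hin : {a ∈ F | a.1 ∉ U ∧ a.2 ∈ U} = ∅ :=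
    filter_eq_empty_iff.2 fun a haF h =>
      h.1 (hU a.swap (mem_union_right _ (mem_image_of_mem _ haF)) h.2)
  have hcut := hF.cutCard_eq hsU htU
  rw [hin, card_empty] at hcut
  omega

end Augmentation

section Menger
variable {V : Type*} [DecidableEq V] {E : Finset (V × V)} {s t : V} {U : Finset V}

noncomputable def maxPaths (E : Finset (V × V)) (s t : V) : ℕ :=
  sSup {n | ∃ P : Finset (List V), P.card = n ∧ IsEdgeDisjointFamily E s t P}

lemma IsEdgeDisjointFamily.card_le_cutCard {P : Finset (List V)}
    (hP : IsEdgeDisjointFamily E s t P) (hsU : s ∈ U) (htU : t ∉ U) : P.card ≤ cutCard E U := by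
  have hcross : ∀ p ∈ P, ∃ a ∈ pathArcs p, a.1 ∈ U ∧ a.2 ∉ U := fun p hp =>
    exists_mem_pathArcs_of_mem_of_notMem U (hP.1 p hp).2.2.1 (hP.1 p hp).2.2.2 hsU htU
  have : Nonempty (V × V) := ⟨(s, s)⟩
  choose! f hf using hcross
  refine card_le_card_of_injOn f (fun p hp => mem_filter.2
    ⟨(hP.1 p hp).mem_of_mem_pathArcs (hf p hp).1, (hf p hp).2⟩) fun p hp q hq hpq => ?_
  by_contra hne
  exact hP.2 hp hq hne _ (hf p hp).1 (hpq ▸ (hf q hq).1)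

lemma isGreatest_maxPaths (hst : s ≠ t) :
    IsGreatest {n | ∃ P : Finset (List V), P.card = n ∧ IsEdgeDisjointFamily E s t P}
      (maxPaths E s t) := by
  have hbdd : BddAbove
      {n | ∃ P : Finset (List V), P.card = n ∧ IsEdgeDisjointFamily E s t P} := by
    refine ⟨cutCard E {s}, ?_⟩
    rintro _ ⟨P, rfl, hP⟩
    exact hP.card_le_cutCard (mem_singleton_self s) (by simpa using hst.symm)
  exact ⟨Nat.sSup_mem ⟨0, ∅, rfl, by simp, by simp⟩ hbdd, fun n hn => le_csSup hbdd hn⟩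

lemma maxPaths_le_cutCard (hsU : s ∈ U) (htU : t ∉ U) : maxPaths E s t ≤ cutCard E U := by
  obtain ⟨P, hcard, hP⟩ := (isGreatest_maxPaths (ne_of_mem_of_not_mem hsU htU)).1
  exact hcard ▸ hP.card_le_cutCard hsU htU

/-- The max-flow min-cut theorem for edge-disjoint paths (Menger). -/
theorem exists_cutCard_le_maxPaths (hst : s ≠ t) :
    ∃ U, s ∈ U ∧ t ∉ U ∧ cutCard E U ≤ maxPaths E s t := by
  obtain ⟨P, hcard, hP⟩ := (isGreatest_maxPaths (E := E) hst).1
  have hF := hP.isFlow_familyArcs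
  have hFE := hP.familyArcs_subset
  have hval := hP.netOut_familyArcs_self hst
  -- The minimum cut: the vertices reachable from `s` in the residual graph of a maximum family.
  have htU : t ∉ reach (residualArcs E (familyArcs P)) s := by
    intro htU
    obtain ⟨q, hq⟩ := exists_isPath_of_reflTransGen (mem_reach.1 htU)
    obtain ⟨hF', hval'⟩ := hF.augment_pathArcs hst hq
    obtain ⟨P', hP', hcard'⟩ := hF'.exists_family hst
    have hle := (isGreatest_maxPaths hst).2 ⟨P', rfl, hP'.mono (augment_subset hFE
      fun a ha => hq.mem_of_mem_pathArcs (List.mem_toFinset.1 ha))⟩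
    omega
  exact ⟨_, self_mem_reach, htU, by
    have := hF.cutCard_le_netOut self_mem_reach htU fun a ha => snd_mem_reach ha
    omega⟩

end Menger

section FirstArcs
variable {V : Type*} [DecidableEq V] {E E' : Finset (V × V)} {s t v : V} {A B U : Finset V}

def restrictOut (E : Finset (V × V)) (s : V) (A : Finset V) : Finset (V × V) :=
  {a ∈ E | a.1 = s → a.2 ∈ A}

lemma isPath_restrictOut_iff (hst : s ≠ t) {p : List V} :
    IsPath (restrictOut E s A) s t p ↔
      IsPath E s t p ∧ ∃ v ∈ A, (pathArcs p).head? = some (s, v) := by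
  constructor
  · intro hp
    refine ⟨hp.mono (filter_subset _ _), ?_⟩
    obtain ⟨b, r, rfl⟩ := hp.eq_cons_cons hst
    exact ⟨b, (mem_filter.1 (hp.mem_of_mem_pathArcs (a := (s, b)) (by simp))).2 rfl, rfl⟩
  · rintro ⟨hp, v, hv, hhead⟩
    obtain ⟨b, r, rfl⟩ := hp.eq_cons_cons hst
    obtain rfl : b = v := by simpa using hhead
    refine ⟨hp.1, isChain_iff_forall_mem_pathArcs.2 fun a ha =>
      mem_filter.2 ⟨hp.mem_of_mem_pathArcs ha, fun has => ?_⟩, hp.2.2⟩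
    rcases List.mem_cons.1 ha with rfl | ha
    · exact hv
    · exact absurd (has ▸ fst_mem_of_mem_pathArcs ha) (List.nodup_cons.1 hp.1).1

lemma fMax_eq_maxPaths (hst : s ≠ t) : fMax E s t A = maxPaths (restrictOut E s A) s t := by
  simp only [fMax, maxPaths, IsEdgeDisjointFamily, isPath_restrictOut_iff hst, forall_and,
    and_assoc, and_comm]

lemma cutCard_mono (h : E ⊆ E') : cutCard E U ≤ cutCard E' U :=
  card_le_card (filter_subset_filter _ h)

lemma cutCard_insert_le (a : V × V) : cutCard (insert a E) U ≤ cutCard E U + 1 := by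
  rw [cutCard, filter_insert]
  split_ifs
  exacts [card_insert_le _ _, Nat.le_succ _]

lemma restrictOut_mono (h : A ⊆ B) : restrictOut E s A ⊆ restrictOut E s B :=
  fun _ ha => mem_filter.2 ⟨(mem_filter.1 ha).1, fun hs => h ((mem_filter.1 ha).2 hs)⟩

lemma restrictOut_insert_subset :
    restrictOut E s (insert v A) ⊆ insert (s, v) (restrictOut E s A) := by
  intro a ha
  obtain ⟨haE, hA⟩ := mem_filter.1 ha
  by_cases has : a = (s, v)
  · exact has ▸ mem_insert_self _ _
  · exact mem_insert_of_mem (mem_filter.2 ⟨haE, fun hs =>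
      (mem_insert.1 (hA hs)).resolve_left fun hv => has (Prod.ext hs hv)⟩)

lemma cutCard_restrictOut_union_add_inter_le {U₁ U₂ : Finset V} (h₁ : s ∈ U₁) (h₂ : s ∈ U₂) :
    cutCard (restrictOut E s (A ∪ B)) (U₁ ∪ U₂) + cutCard (restrictOut E s (A ∩ B)) (U₁ ∩ U₂) ≤
      cutCard (restrictOut E s A) U₁ + cutCard (restrictOut E s B) U₂ := by
  simp only [cutCard, restrictOut, filter_filter, card_filter, ← sum_add_distrib]
  refine sum_le_sum fun a _ => ?_
  rcases eq_or_ne a.1 s with ha | ha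
  · simp only [ha, h₁, h₂, mem_union, mem_inter]
    split_ifs <;> simp_all
  · simp only [ha, mem_union, mem_inter]
    split_ifs <;> simp_all

lemma fMax_le_cutCard (hsU : s ∈ U) (htU : t ∉ U) :
    fMax E s t A ≤ cutCard (restrictOut E s A) U :=
  (fMax_eq_maxPaths (ne_of_mem_of_not_mem hsU htU)).trans_le (maxPaths_le_cutCard hsU htU)

lemma exists_cutCard_le_fMax (hst : s ≠ t) (E : Finset (V × V)) (A : Finset V) :
    ∃ U, s ∈ U ∧ t ∉ U ∧ cutCard (restrictOut E s A) U ≤ fMax E s t A := by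
  rw [fMax_eq_maxPaths hst]
  exact exists_cutCard_le_maxPaths hst

lemma fMax_empty (hst : s ≠ t) : fMax E s t ∅ = 0 :=
  Nat.le_zero.1 <| (fMax_le_cutCard (mem_singleton_self s) (by simpa using hst.symm)).trans_eq
    (by simp +contextual [cutCard, restrictOut])

lemma fMax_mono (hst : s ≠ t) : Monotone (fMax E s t) := fun A B hAB => by
  obtain ⟨U, hsU, htU, hU⟩ := exists_cutCard_le_fMax hst E B
  exact (fMax_le_cutCard hsU htU).trans ((cutCard_mono (restrictOut_mono hAB)).trans hU)

lemma fMax_insert_le (hst : s ≠ t) (A : Finset V) (v : V) :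
    fMax E s t (insert v A) ≤ fMax E s t A + 1 := by
  obtain ⟨U, hsU, htU, hU⟩ := exists_cutCard_le_fMax hst E A
  calc fMax E s t (insert v A) ≤ cutCard (restrictOut E s (insert v A)) U :=
        fMax_le_cutCard hsU htU
    _ ≤ cutCard (insert (s, v) (restrictOut E s A)) U := cutCard_mono restrictOut_insert_subset
    _ ≤ fMax E s t A + 1 := (cutCard_insert_le _).trans (by omega)

lemma fMax_union_add_inter_le (hst : s ≠ t) (A B : Finset V) :
    fMax E s t (A ∪ B) + fMax E s t (A ∩ B) ≤ fMax E s t A + fMax E s t B := by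
  obtain ⟨U₁, hs₁, ht₁, h₁⟩ := exists_cutCard_le_fMax hst E A
  obtain ⟨U₂, hs₂, ht₂, h₂⟩ := exists_cutCard_le_fMax hst E B
  have := fMax_le_cutCard (E := E) (t := t) (A := A ∪ B) (mem_union_left U₂ hs₁)
    (by simp [ht₁, ht₂])
  have := fMax_le_cutCard (E := E) (t := t) (A := A ∩ B) (mem_inter_of_mem hs₁ hs₂)
    fun h => ht₁ (mem_inter.1 h).1
  have := cutCard_restrictOut_union_add_inter_le (E := E) (A := A) (B := B) hs₁ hs₂
  omega

end FirstArcs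

section Greedy
variable {α : Type*} [DecidableEq α] {f : Finset α → ℕ}

lemma le_of_insert_le_of_subset (hmono : Monotone f)
    (hsub : ∀ A B, f (A ∪ B) + f (A ∩ B) ≤ f A + f B) {S T : Finset α} {v : α} (hST : S ⊆ T)
    (h : f (insert v S) ≤ f S) : f (insert v T) ≤ f T := by
  have hunion : insert v S ∪ T = insert v T := by rw [insert_union, union_eq_right.2 hST]
  have hsub' := hsub (insert v S) T
  have hinter := hmono (subset_inter (subset_insert v S) hST)
  rw [hunion] at hsub'
  omega

lemma greedy_invariant (hmono : Monotone f) (hunit : ∀ A v, f (insert v A) ≤ f A + 1)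
    (hsub : ∀ A B, f (A ∪ B) + f (A ∩ B) ≤ f A + f B) (hempty : f ∅ = 0)
    (l : List α) (S : ℕ → Finset α) (hS0 : S 0 = ∅)
    (hSstep : ∀ (j : ℕ) (hj : j < l.length),
      S (j + 1) =
        if f (S j) < f (insert (l.get ⟨j, hj⟩) (S j))
        then insert (l.get ⟨j, hj⟩) (S j) else S j) :
    ∀ j ≤ l.length, f (S j) = (S j).card ∧ S j ⊆ (l.take j).toFinset ∧
      f (l.take j).toFinset = f (S j) := by
  intro j
  induction j with
  | zero => simp [hS0, hempty]
  | succ j ih =>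
    intro hj
    obtain ⟨hcard, hST, hspan⟩ := ih (by omega)
    have htake : (l.take (j + 1)).toFinset = insert (l.get ⟨j, hj⟩) (l.take j).toFinset := by
      rw [List.take_add_one, List.getElem?_eq_getElem hj, Option.toList_some,
        List.toFinset_append, union_comm]
      rfl
    rw [htake, hSstep j hj]
    set v := l.get ⟨j, hj⟩
    split_ifs with hacc
    · have hvS : v ∉ S j := fun hv => (insert_eq_of_mem hv ▸ hacc).false
      have := hunit (S j) v
      have := hunit (l.take j).toFinset v
      have := hmono (insert_subset_insert v hST)
      exact ⟨by rw [card_insert_of_notMem hvS]; omega, insert_subset_insert v hST, by omega⟩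
    · have := le_of_insert_le_of_subset hmono hsub hST (not_lt.1 hacc)
      have := hmono (subset_insert v (l.take j).toFinset)
      exact ⟨hcard, hST.trans (subset_insert _ _), by omega⟩

end Greedy

theorem greedy_first_arcs_achieve_max_general {V : Type*} [DecidableEq V]
    (E : Finset (V × V)) (s t : V) (hst : s ≠ t)
    (l : List V) (hmem : ∀ v : V, v ∈ l ↔ (s, v) ∈ E)
    (S : ℕ → Finset V) (hS0 : S 0 = ∅)
    (hSstep : ∀ (j : ℕ) (hj : j < l.length),
      S (j + 1) =
        if fMax E s t (S j) < fMax E s t (insert (l.get ⟨j, hj⟩) (S j))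
        then insert (l.get ⟨j, hj⟩) (S j) else S j) :
    fMax E s t (S l.length) = (S l.length).card ∧
    IsGreatest {n | ∃ P : Finset (List V), P.card = n ∧ IsEdgeDisjointFamily E s t P}
      (S l.length).card := by
  obtain ⟨hcard, -, hspan⟩ := greedy_invariant (fMax_mono hst) (fMax_insert_le hst)
    (fMax_union_add_inter_le hst) (fMax_empty hst) l S hS0 hSstep l.length le_rfl
  have hE : restrictOut E s l.toFinset = E :=
    filter_true_of_mem fun a ha has => List.mem_toFinset.2 ((hmem a.2).2 (has ▸ ha))
  rw [List.take_length] at hspan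
  refine ⟨hcard, ?_⟩
  rw [← hcard, ← hspan, fMax_eq_maxPaths hst, hE]
  exact isGreatest_maxPaths hst

/-- **Greedy correctness.** Let `l = v₁, …, v_d` be an enumeration of the out-neighbors
of `s`, and build `S_0 = ∅`, `S_j = S_{j-1} ∪ {v_j}` if `f(S_{j-1} ∪ {v_j}) > f(S_{j-1})`
and `S_j = S_{j-1}` otherwise. Then `f(S_d) = |S_d|` and `|S_d|` is the maximum
cardinality of a set of pairwise edge-disjoint directed paths from `s` to `t` in `G`. -/
theorem greedy_first_arcs_achieve_max {V : Type*} [Fintype V] [DecidableEq V]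
    (E : Finset (V × V)) (s t : V) (hst : s ≠ t)
    (l : List V) (hl : l.Nodup) (hmem : ∀ v : V, v ∈ l ↔ (s, v) ∈ E)
    (S : ℕ → Finset V) (hS0 : S 0 = ∅)
    (hSstep : ∀ (j : ℕ) (hj : j < l.length),
      S (j + 1) =
        if fMax E s t (S j) < fMax E s t (insert (l.get ⟨j, hj⟩) (S j))
        then insert (l.get ⟨j, hj⟩) (S j) else S j) :
    fMax E s t (S l.length) = (S l.length).card ∧
    IsGreatest {n | ∃ P : Finset (List V), P.card = n ∧ IsEdgeDisjointFamily E s t P}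
      (S l.length).card :=
  greedy_first_arcs_achieve_max_general E s t hst l hmem S hS0 hSstep
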